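/- arXiv:1908.00563 — 2 statements merged into one kernel-verified Lean document; each statement's English description precedes it below -/
import Mathlib

section
/- Counting inequality in the proof of the Adversarial Permutation Lemma (Lemma 3.2): let c = 1/(2 + 4/Real.logb 2 10) ≈ 0.3121, fix a real ε with 0 < ε < 1, and let k : ℕ → ℕ satisfy k(b) ≥ 1 for all b and (fun b => (k(b) : ℝ)) = o(fun b => (b : ℝ)) as b → ∞. For b ∈ ℕ define the real number t(b) = (1 − ε)·c·b·Real.logb (10·k(b)) b. Then for all sufficiently large b, (2 : ℝ)^(4·t(b)) · (2·t(b))^(k(b)) · (10·k(b) : ℝ)^(2·t(b)) < (b! : ℝ), where all powers are real powers. -/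
/-!
Take logarithms. With `L = log b` and `K = log (10 k) ≥ log 10` we have `t = (1 - ε) c b L / K`, so
the tree and the two operation sequences contribute `(4 log 2 + 2 K) t ≤ (1 - ε) b L`: this is the
inequality the constant `c` is tuned for. The finger positions contribute `k log (2t) ≤ 2 k L`,
which is `o(b L)` because `k = o(b)`, while `log b! ≥ b L - b > (1 - ε/2) b L` once `L > 2/ε`.
-/

open Filter Real

open scoped Nat

lemma mul_log_sub_le_log_factorial (n : ℕ) : n * log n - n ≤ log (n ! : ℝ) := by
  rcases Nat.eq_zero_or_pos n with rfl | hn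
  · simp
  have hpos : (0 : ℝ) < (n : ℝ) ^ n / n ! := by positivity
  have h := log_le_log hpos (pow_div_factorial_le_exp _ n.cast_nonneg n)
  rw [log_exp, log_div (by positivity) (by positivity), log_pow] at h
  linarith

lemma lt_log_factorial {ε : ℝ} (hε : 0 < ε) {n : ℕ} (hn : 2 / ε < log n) :
    (1 - ε / 2) * n * log n < log (n ! : ℝ) := by
  have hεL : 2 < ε * log n := by rwa [div_lt_iff₀' hε] at hn
  have hn0 : (0 : ℝ) < n := by
    by_contra! h
    simp [le_antisymm h (Nat.cast_nonneg n)] at hεL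
    linarith
  have hgap : (1 - ε / 2) * n * log n < n * log n - n := by nlinarith
  exact hgap.trans_le (mul_log_sub_le_log_factorial n)

lemma one_lt_log_ten : 1 < log 10 := by
  rw [lt_log_iff_exp_lt (by norm_num)]
  linarith [exp_one_lt_d9]

lemma log_rpow_mul_rpow_mul_rpow {t x m : ℝ} (ht : 0 < t) (hm : 0 < m) :
    log (2 ^ (4 * t) * (2 * t) ^ x * m ^ (2 * t))
      = 4 * t * log 2 + x * log (2 * t) + 2 * t * log m := by
  rw [log_mul (by positivity) (by positivity), log_mul (by positivity) (by positivity),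
    log_rpow two_pos, log_rpow (by positivity), log_rpow hm]

lemma four_log_two_add_two_log_mul_div_le {a m s : ℝ} (ha : 1 < a) (ham : a ≤ m) (hs : 0 ≤ s) :
    (4 * log 2 + 2 * log m) * (s / (2 + 4 / logb 2 a) / log m) ≤ s := by
  have hla : 0 < log a := log_pos ha
  have hlm : log a ≤ log m := log_le_log (by linarith) ham
  have hD : 0 < 2 + 4 / logb 2 a := by have := logb_pos one_lt_two ha; positivity
  have hratio : (4 * log 2 + 2 * log m) / log m ≤ 2 + 4 / logb 2 a := by
    have hsplit : (4 * log 2 + 2 * log m) / log m = 2 + 4 * log 2 / log m := by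
      field_simp [(hla.trans_le hlm).ne']
      ring
    rw [hsplit, logb, div_div_eq_mul_div]
    have := log_pos one_lt_two
    gcongr
  calc (4 * log 2 + 2 * log m) * (s / (2 + 4 / logb 2 a) / log m)
      = (4 * log 2 + 2 * log m) / log m / (2 + 4 / logb 2 a) * s := by ring
    _ ≤ 1 * s := by gcongr; rwa [div_le_one hD]
    _ = s := one_mul s

lemma rpow_mul_rpow_mul_rpow_lt_factorial {ε c k t : ℝ} {b : ℕ} (hε1 : ε < 1)
    (hc : c = 1 / (2 + 4 / logb 2 10)) (hk : 1 ≤ k) (hkb : k ≤ ε / 4 * b)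
    (hb : 2 / ε < log b) (ht : t = (1 - ε) * c * b * logb (10 * k) b) :
    (2 : ℝ) ^ (4 * t) * (2 * t) ^ k * (10 * k) ^ (2 * t) < (b ! : ℝ) := by
  have hε : 0 < ε := by
    by_contra! h
    nlinarith [(Nat.cast_nonneg b : (0 : ℝ) ≤ b)]
  set L := log b
  set K := log (10 * k)
  set D := 2 + 4 / logb 2 10
  set s := (1 - ε) * b * L
  have hL : 0 < L := (div_pos two_pos hε).trans hb
  have hb0 : (0 : ℝ) < b := by
    by_contra! h
    simp [L, le_antisymm h b.cast_nonneg] at hL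
  have hK : 1 < K := one_lt_log_ten.trans_le (log_le_log (by norm_num) (by linarith))
  have hD : 2 ≤ D := by
    have := logb_pos one_lt_two (by norm_num : (1 : ℝ) < 10)
    simp only [D]
    linarith [div_pos four_pos this]
  have hs : 0 < s := by
    have : 0 < 1 - ε := by linarith
    positivity
  have ht' : t = s / D / K := by rw [ht, hc, logb]; ring
  have htpos : 0 < t := by rw [ht']; positivity
  have htree : (4 * log 2 + 2 * K) * t ≤ s :=
    ht' ▸ four_log_two_add_two_log_mul_div_le (by norm_num) (by linarith) hs.le
  have h2t : 2 * t ≤ (b : ℝ) ^ 2 := by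
    have hts : t ≤ s / 2 / 1 := by rw [ht']; gcongr
    have hsb : s ≤ b * L := by simp only [s]; nlinarith
    nlinarith [log_le_self hb0.le]
  have hlog2t : log (2 * t) ≤ 2 * L := by
    simpa [L, log_pow] using log_le_log (by positivity) h2t
  have hfingers : k * log (2 * t) ≤ ε / 2 * b * L := by nlinarith
  have hlogW :
      log ((2 : ℝ) ^ (4 * t) * (2 * t) ^ k * (10 * k) ^ (2 * t)) ≤ (1 - ε / 2) * b * L := by
    rw [log_rpow_mul_rpow_mul_rpow htpos (by positivity)]
    nlinarith
  rw [← log_lt_log_iff (by positivity) (by positivity)]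
  exact hlogW.trans_lt (lt_log_factorial hε hb)

/-- Counting inequality in the proof of the Adversarial Permutation Lemma
(Lemma 3.2): with `c = 1/(2 + 4/log₂ 10)`, `0 < ε < 1`, `k(b) ≥ 1` and
`k(b) = o(b)`, setting `t(b) = (1−ε)·c·b·log_{10·k(b)} b`, we have
`2^{4t} · (2t)^{k} · (10k)^{2t} < b!` for all sufficiently large `b`,
where all powers are real powers. -/
theorem adversarial_counting (ε : ℝ) (hε : 0 < ε) (hε1 : ε < 1)
    (k : ℕ → ℕ) (hk : ∀ b, 1 ≤ k b)
    (hko : (fun b => (k b : ℝ)) =o[atTop] (fun b => (b : ℝ)))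
    (c : ℝ) (hc : c = 1 / (2 + 4 / Real.logb 2 10))
    (t : ℕ → ℝ)
    (ht : ∀ b : ℕ, t b = (1 - ε) * c * b * Real.logb (10 * k b) b) :
    ∀ᶠ b : ℕ in atTop,
      (2 : ℝ) ^ (4 * t b) * (2 * t b) ^ ((k b : ℝ)) *
          ((10 * k b : ℕ) : ℝ) ^ (2 * t b) < (Nat.factorial b : ℝ) := by
  have hlog : ∀ᶠ b : ℕ in atTop, 2 / ε < log b :=
    (tendsto_log_atTop.comp tendsto_natCast_atTop_atTop).eventually_gt_atTop _
  filter_upwards [hko.bound (by positivity : 0 < ε / 4), hlog] with b hkb hb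
  rw [norm_of_nonneg (k b).cast_nonneg, norm_of_nonneg b.cast_nonneg] at hkb
  push_cast
  exact rpow_mul_rpow_mul_rpow_lt_factorial hε1 hc (by exact_mod_cast hk b) hkb hb (ht b)
end

section
/- Online lower bound with persistent fingers (Lemma 3.7, made precise): let G be a connected simple graph on a finite vertex set V of cardinality n in which every vertex has degree at most 3, and let F ⊆ V be a finite set of k ≥ 1 vertices (the fingers). Then at least n/2 vertices u ∈ V satisfy: for every f ∈ F, the graph distance satisfies (G.dist f u : ℝ) ≥ Real.logb 2 n − Real.logb 2 k − Real.logb 2 3 − 1. -/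
/-!
In a graph of maximum degree 3, every vertex at distance `d + 1` from `f` has a neighbour at
distance `d`, so it has at most two neighbours at distance `d + 2`; hence the sphere of radius
`d + 1` about `f` has at most `3 * 2 ^ d` vertices and the ball of radius `r` at most `3 * 2 ^ r`.
The vertices closer than `D` to some finger therefore number at most `k * 3 * 2 ^ D`, which is
exactly `n / 2` for `D = log₂ n - log₂ k - log₂ 3 - 1`.
-/

open Finset SimpleGraph

namespace SimpleGraph

variable {V : Type*} {G : SimpleGraph V}

lemma exists_adj_dist_eq_of_dist_eq_succ {f u : V} {d : ℕ} (h : G.dist f u = d + 1) :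
    ∃ v, G.Adj v u ∧ G.dist f v = d := by
  rw [dist_comm] at h
  obtain ⟨p, hp⟩ := exists_walk_of_dist_ne_zero (h.trans_ne d.succ_ne_zero)
  cases p with
  | nil => simp at h
  | cons hadj q =>
    refine ⟨_, hadj.symm, ?_⟩
    have hq := dist_le q
    have htri := hadj.reachable.dist_triangle_left f
    rw [Walk.length_cons] at hp
    rw [dist_eq_one_iff_adj.mpr hadj] at htri
    rw [dist_comm]
    omega

variable [Fintype V] [DecidableRel G.Adj]

lemma card_neighborFinset_filter_dist_eq_succ_le {f v : V} {d : ℕ} (hv : G.dist f v = d + 1) :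
    #{u ∈ G.neighborFinset v | G.dist f u = d + 2} ≤ G.degree v - 1 := by
  classical
  obtain ⟨w, hwv, hw⟩ := exists_adj_dist_eq_of_dist_eq_succ hv
  have hsub : {u ∈ G.neighborFinset v | G.dist f u = d + 2} ⊆ (G.neighborFinset v).erase w := by
    intro u hu
    rw [mem_filter] at hu
    exact mem_erase.mpr ⟨fun huw => by rw [huw] at hu; omega, hu.1⟩
  calc _ ≤ _ := card_le_card hsub
    _ = G.degree v - 1 := by
      rw [card_erase_of_mem (by simpa using hwv.symm), card_neighborFinset_eq_degree]

lemma card_dist_eq_succ_le {Δ : ℕ} (hdeg : ∀ v, G.degree v ≤ Δ) (f : V) (d : ℕ) :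
    #{u | G.dist f u = d + 1} ≤ Δ * (Δ - 1) ^ d := by
  induction d with
  | zero =>
    have hsub : ({u | G.dist f u = 0 + 1} : Finset V) ⊆ G.neighborFinset f := by
      intro u hu
      simpa using hu
    simpa using (card_le_card hsub).trans (card_neighborFinset_eq_degree G f ▸ hdeg f)
  | succ d ih =>
    classical
    have hsub : ({u | G.dist f u = d + 2} : Finset V) ⊆
        ({v | G.dist f v = d + 1} : Finset V).biUnion
          fun v => {u ∈ G.neighborFinset v | G.dist f u = d + 2} := by
      intro u hu
      rw [mem_filter] at hu
      obtain ⟨v, hvu, hv⟩ := exists_adj_dist_eq_of_dist_eq_succ hu.2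
      simp only [mem_biUnion, mem_filter, mem_univ, mem_neighborFinset, true_and]
      exact ⟨v, hv, hvu, hu.2⟩
    calc _ ≤ _ := card_le_card hsub
      _ ≤ _ := card_biUnion_le_card_mul _ _ (Δ - 1) fun v hv =>
          (card_neighborFinset_filter_dist_eq_succ_le (mem_filter.mp hv).2).trans
            (Nat.sub_le_sub_right (hdeg v) 1)
      _ ≤ Δ * (Δ - 1) ^ d * (Δ - 1) := Nat.mul_le_mul_right _ ih
      _ = Δ * (Δ - 1) ^ (d + 1) := by ring

lemma card_dist_le_le (hconn : G.Connected) (hdeg : ∀ v, G.degree v ≤ 3) (f : V) (r : ℕ) :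
    #{u | G.dist f u ≤ r} ≤ 3 * 2 ^ r := by
  induction r with
  | zero =>
    have hsub : ({u | G.dist f u ≤ 0} : Finset V) ⊆ {f} := by
      intro u hu
      simpa [hconn.dist_eq_zero_iff, eq_comm] using hu
    exact (card_le_card hsub).trans (by simp)
  | succ r ih =>
    classical
    calc #{u | G.dist f u ≤ r + 1}
        = #(({u | G.dist f u ≤ r} : Finset V) ∪ ({u | G.dist f u = r + 1} : Finset V)) := by
          congr 1
          ext u
          simp only [mem_filter, mem_union, mem_univ, true_and]
          omega
      _ ≤ _ := card_union_le _ _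
      _ ≤ 3 * 2 ^ r + 3 * (3 - 1) ^ r := Nat.add_le_add ih (card_dist_eq_succ_le hdeg f r)
      _ = 3 * 2 ^ (r + 1) := by ring

lemma card_dist_lt_le (hconn : G.Connected) (hdeg : ∀ v, G.degree v ≤ 3) (f : V) (D : ℝ) :
    (#{u | (G.dist f u : ℝ) < D} : ℝ) ≤ 3 * 2 ^ D := by
  simp_rw [← Nat.lt_ceil]
  cases hm : ⌈D⌉₊ with
  | zero => simp only [Nat.not_lt_zero, filter_false, card_empty, Nat.cast_zero]; positivity
  | succ r =>
    have hrD : (r : ℝ) ≤ D := (Nat.lt_ceil.mp (hm ▸ r.lt_succ_self)).le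
    simp_rw [Nat.lt_succ_iff]
    calc (#{u | G.dist f u ≤ r} : ℝ) ≤ 3 * 2 ^ r := mod_cast card_dist_le_le hconn hdeg f r
      _ ≤ 3 * 2 ^ D := by
        rw [← Real.rpow_natCast]
        gcongr
        norm_num

lemma card_exists_dist_lt_le (hconn : G.Connected) (hdeg : ∀ v, G.degree v ≤ 3) (F : Finset V)
    (D : ℝ) : (#{u | ∃ f ∈ F, (G.dist f u : ℝ) < D} : ℝ) ≤ #F * (3 * 2 ^ D) := by
  classical
  have hsub : ({u | ∃ f ∈ F, (G.dist f u : ℝ) < D} : Finset V) ⊆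
      F.biUnion fun f => {u | (G.dist f u : ℝ) < D} := by
    intro u hu
    simpa using hu
  calc (#{u | ∃ f ∈ F, (G.dist f u : ℝ) < D} : ℝ)
        ≤ ∑ f ∈ F, (#{u | (G.dist f u : ℝ) < D} : ℝ) := by
        exact_mod_cast (card_le_card hsub).trans card_biUnion_le
    _ ≤ ∑ _f ∈ F, 3 * 2 ^ D := sum_le_sum fun f _ => card_dist_lt_le hconn hdeg f D
    _ = #F * (3 * 2 ^ D) := by rw [sum_const, nsmul_eq_mul]

end SimpleGraph

/-- Online lower bound with persistent fingers (Lemma 3.7, made precise):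
in a connected simple graph on `n` vertices with maximum degree at most 3,
for any set `F` of `k ≥ 1` vertices (the fingers), at least `n/2` vertices
`u` have distance at least `log₂ n − log₂ k − log₂ 3 − 1` from every finger. -/
theorem persistent_fingers_lower_bound {V : Type*} [Fintype V]
    (G : SimpleGraph V) [DecidableRel G.Adj]
    (hconn : G.Connected) (hdeg : ∀ v : V, G.degree v ≤ 3)
    (F : Finset V) (hF : 1 ≤ F.card) :
    (Fintype.card V : ℝ) / 2 ≤
      ({u : V | ∀ f ∈ F,
          Real.logb 2 (Fintype.card V) - Real.logb 2 F.card - Real.logb 2 3 - 1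
            ≤ (G.dist f u : ℝ)} : Set V).ncard := by
  classical
  set D := Real.logb 2 (Fintype.card V) - Real.logb 2 F.card - Real.logb 2 3 - 1 with hD
  have hn : 0 < (Fintype.card V : ℝ) := by
    have := hconn.nonempty
    exact_mod_cast Fintype.card_pos
  have hk : 0 < (F.card : ℝ) := by exact_mod_cast hF
  have hbudget : (F.card : ℝ) * (3 * 2 ^ D) = Fintype.card V / 2 := by
    simp only [hD, Real.rpow_sub two_pos, Real.rpow_logb two_pos (by norm_num) hn,
      Real.rpow_logb two_pos (by norm_num) hk, Real.rpow_logb two_pos (by norm_num) three_pos,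
      Real.rpow_one]
    field_simp
  have hsplit : ({u | ∀ f ∈ F, D ≤ (G.dist f u : ℝ)} : Set V).ncard
      + #{u | ∃ f ∈ F, (G.dist f u : ℝ) < D} = Fintype.card V := by
    rw [Set.ncard_eq_toFinset_card', Set.toFinset_ofPred, ← card_univ,
      ← card_filter_add_card_filter_not (s := univ)
        (fun u => ∀ f ∈ F, D ≤ (G.dist f u : ℝ))]
    simp only [not_forall, not_le, exists_prop]
  have hclose := card_exists_dist_lt_le hconn hdeg F D
  have hsplitR := congrArg (Nat.cast (R := ℝ)) hsplit
  push_cast at hsplitR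
  linarith
end
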